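/- arXiv:2302.09796 — 2 statements merged into one kernel-verified Lean document; each statement's English description precedes it below -/
import Mathlib

section
/- Let H = (V, E) be a directed graph and X ⊆ V. Define I ⊆ 2^V by: Y ∈ I iff there exists a collection of vertex-disjoint directed paths in H whose starting points lie in X and whose set of ending points is exactly Y. Then (V, I) is a matroid (the strict gammoid). -/
open Finset

/-- A matroid on a finite ground set `E`, given by its independence predicate. -/
structure FinMatroid (α : Type*) [DecidableEq α] where
  E : Finset α
  Indep : Finset α → Prop
  indep_subset_ground : ∀ ⦃S : Finset α⦄, Indep S → S ⊆ E
  indep_empty : Indep ∅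
  indep_mono : ∀ ⦃S T : Finset α⦄, Indep S → T ⊆ S → Indep T
  indep_exchange : ∀ ⦃S T : Finset α⦄, Indep S → Indep T → S.card < T.card →
    ∃ x ∈ T, x ∉ S ∧ Indep (insert x S)

variable {α : Type*} [DecidableEq α]

/-- The rank of a set `X`: the maximum cardinality of an independent subset of `X`. -/
noncomputable def FinMatroid.rank (M : FinMatroid α) (X : Finset α) : ℕ :=
  sSup {n : ℕ | ∃ S : Finset α, M.Indep S ∧ S ⊆ X ∧ S.card = n}

/-- Independence in the strict gammoid of the digraph `E` with source set `X`:
`Y` is independent iff there are vertex-disjoint directed paths in `E` starting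
in `X` and ending exactly at `Y`. -/
def GammoidIndep {V : Type*} (E : V → V → Prop) (X Y : Finset V) : Prop :=
  ∃ P : V → List V,
    (∀ y ∈ Y, ∃ h : (P y) ≠ [],
      (P y).head h ∈ X ∧ (P y).getLast h = y ∧ (P y).Chain' E) ∧
    (∀ y ∈ Y, ∀ z ∈ Y, y ≠ z → ∀ v ∈ P y, v ∉ P z)

/-!
Call `g : V → V` a predecessor map for `Y` if it sends every non-source `u` to `u` itself or to
an in-neighbour of `u`, injectively on `V ∖ X`, and never into `Y`. Such a map exists iff `Y` is
linked from `X`: along disjoint simple paths, send each vertex to its predecessor; conversely,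
iterating `g` from `y ∈ Y` must reach `X`, because injectivity and `g u ∉ Y` forbid a
cycle through `y`, and the traced paths are disjoint for the same reason.

A predecessor map is a system of distinct representatives of the family `{u} ∪ N⁻(u)`
(`u ∉ X`) avoiding `Y`, so the strict gammoid is dual to a transversal matroid (Ingleton–Piff).
The exchange axiom follows from Hall's theorem: if no `t ∈ T ∖ S` can be added to `S`, each such
`t` lies in the neighbourhood of a Hall-tight set for `S`; tight sets are closed under union since
`s ↦ |N(s) ∖ S|` is submodular, and Hall's condition for `T` on the union of all of them gives
`|T ∖ S| ≤ |S ∖ T|`.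
-/

section Transversal

variable {ι : Type*}

def HasTransversalAvoiding (N : ι → Finset α) (Y : Finset α) : Prop :=
  ∃ f : ι → α, Function.Injective f ∧ ∀ i, f i ∈ N i ∧ f i ∉ Y

theorem hasTransversalAvoiding_iff_card_le (N : ι → Finset α) (Y : Finset α) :
    HasTransversalAvoiding N Y ↔ ∀ s : Finset ι, #s ≤ #(s.biUnion N \ Y) := by
  have hall := Finset.all_card_le_biUnion_card_iff_exists_injective (fun i => N i \ Y)
  have hsdiff : ∀ s : Finset ι, s.biUnion (fun i => N i \ Y) = s.biUnion N \ Y := by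
    intro s; ext; simp only [Finset.mem_biUnion, Finset.mem_sdiff]; grind
  simp only [hsdiff, Finset.mem_sdiff] at hall
  exact hall.symm

theorem card_biUnion_sdiff_union_add_inter_le [DecidableEq ι] (N : ι → Finset α)
    (S : Finset α) (s t : Finset ι) :
    #((s ∪ t).biUnion N \ S) + #((s ∩ t).biUnion N \ S) ≤
      #(s.biUnion N \ S) + #(t.biUnion N \ S) := by
  have hinter : (s ∩ t).biUnion N \ S ⊆ (s.biUnion N \ S) ∩ (t.biUnion N \ S) := by
    intro a; simp only [Finset.mem_sdiff, Finset.mem_inter, Finset.mem_biUnion]; grind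
  rw [Finset.union_biUnion, Finset.union_sdiff_distrib,
    ← Finset.card_union_add_card_inter (s.biUnion N \ S)]
  exact Nat.add_le_add_left (Finset.card_le_card hinter) _

theorem card_biUnion_sdiff_union_le [DecidableEq ι] {N : ι → Finset α} {S : Finset α}
    (hS : ∀ s : Finset ι, #s ≤ #(s.biUnion N \ S)) {s t : Finset ι}
    (hs : #(s.biUnion N \ S) ≤ #s) (ht : #(t.biUnion N \ S) ≤ #t) :
    #((s ∪ t).biUnion N \ S) ≤ #(s ∪ t) := by
  have := card_biUnion_sdiff_union_add_inter_le N S s t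
  have := hS (s ∩ t)
  have := Finset.card_union_add_card_inter s t
  omega

theorem card_sdiff_add_card_sdiff_le {B S T : Finset α} (hTS : T \ S ⊆ B) :
    #(B \ T) + #(T \ S) ≤ #(B \ S) + #(S \ T) := by
  have hsub : B \ T ⊆ ((B \ S) \ (T \ S)) ∪ (S \ T) := by
    intro a; simp only [Finset.mem_sdiff, Finset.mem_union]; tauto
  have hTS' : T \ S ⊆ B \ S := fun a ha => by
    simp only [Finset.mem_sdiff] at ha ⊢; exact ⟨hTS (Finset.mem_sdiff.2 ha), ha.2⟩
  have := (Finset.card_le_card hsub).trans (Finset.card_union_le _ _)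
  have := Finset.card_sdiff_of_subset hTS'
  have := Finset.card_le_card hTS'
  omega

theorem HasTransversalAvoiding.exists_insert [DecidableEq ι] {N : ι → Finset α}
    {S T : Finset α} (hS : HasTransversalAvoiding N S) (hT : HasTransversalAvoiding N T)
    (hST : #S < #T) :
    ∃ t ∈ T, t ∉ S ∧ HasTransversalAvoiding N (insert t S) := by
  rw [hasTransversalAvoiding_iff_card_le] at hS hT
  by_contra! h
  simp only [hasTransversalAvoiding_iff_card_le, not_forall, not_le] at h
  choose! c hc using h
  have htight : ∀ t ∈ T \ S, t ∈ (c t).biUnion N ∧ #((c t).biUnion N \ S) ≤ #(c t) := by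
    intro t ht
    rw [Finset.mem_sdiff] at ht
    have hlt := hc t ht.1 ht.2
    have hge := hS (c t)
    rw [Finset.sdiff_insert] at hlt
    by_cases hmem : t ∈ (c t).biUnion N \ S
    · rw [Finset.card_erase_of_mem hmem] at hlt
      exact ⟨(Finset.mem_sdiff.1 hmem).1, by omega⟩
    · rw [Finset.erase_eq_of_notMem hmem] at hlt
      omega
  set K := (T \ S).sup c
  have hK : #(K.biUnion N \ S) ≤ #K :=
    Finset.sup_induction (p := fun s => #(s.biUnion N \ S) ≤ #s) (by simp)
      (fun s hs t ht => card_biUnion_sdiff_union_le hS hs ht) (fun t ht => (htight t ht).2)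
  have hcover : T \ S ⊆ K.biUnion N := fun t ht =>
    Finset.biUnion_subset_biUnion_of_subset_left N (Finset.le_sup ht) (htight t ht).1
  have hHallT := hT K
  have hcount := card_sdiff_add_card_sdiff_le hcover
  have := Finset.card_sdiff_lt_card_sdiff_iff.2 hST
  omega

end Transversal

theorem Set.InjOn.eq_iterate_of_iterate_eq {β : Type*} {f : β → β} {s : Set β}
    (hf : Set.InjOn f s) {a b : β} {d : ℕ} :
    ∀ {i : ℕ}, (∀ k < i, f^[k] a ∈ s) → (∀ k < i, f^[k + d] b ∈ s) →
      f^[i] a = f^[i + d] b → a = f^[d] b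
  | 0, _, _, h => by simpa using h
  | i + 1, ha, hb, h => by
    rw [Nat.add_right_comm, Function.iterate_succ_apply', Function.iterate_succ_apply'] at h
    exact hf.eq_iterate_of_iterate_eq (fun k hk => ha k (by omega))
      (fun k hk => hb k (by omega)) (hf (ha i (by omega)) (hb i (by omega)) h)

section ListPaths

variable {β : Type*} {R : β → β → Prop}

theorem List.IsChain.exists_nodup [DecidableEq β] {l : List β} (hl : l.IsChain R) :
    ∃ l' : List β, l'.Nodup ∧ l'.IsChain R ∧ l'.head? = l.head? ∧
      l'.getLast? = l.getLast? ∧ l' ⊆ l := by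
  induction l with
  | nil => exact ⟨[], by simp⟩
  | cons x t ih =>
    obtain ⟨t', hnd, hch, hhead, hlast, hsub⟩ := ih hl.tail
    by_cases hx : x ∈ t'
    · -- cut the cycle from `x` back to `x`
      obtain ⟨a, b, rfl⟩ := List.append_of_mem hx
      refine ⟨x :: b, hnd.sublist (List.sublist_append_right _ _), hch.right_of_append, rfl,
        ?_, ?_⟩
      · have ht : t ≠ [] := by rintro rfl; simp at hlast
        rw [List.getLast?_append_of_ne_nil _ (List.cons_ne_nil _ _)] at hlast
        obtain ⟨y, t, rfl⟩ := List.exists_cons_of_ne_nil ht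
        rw [hlast, List.getLast?_cons_cons]
      · exact fun v hv => List.mem_cons_of_mem _ (hsub (List.mem_append_right _ hv))
    · refine ⟨x :: t', List.nodup_cons.2 ⟨hx, hnd⟩, ?_, rfl, ?_,
        List.cons_subset_cons _ hsub⟩
      · rw [List.isChain_cons, hhead]
        exact ⟨(List.isChain_cons.1 hl).1, hch⟩
      · simp [List.getLast?_cons, hlast]

theorem List.consecutivePairs_eq_zip_dropLast :
    ∀ l : List β, l.consecutivePairs = l.dropLast.zip l.tail
  | [] | [_] => rfl
  | a :: b :: t => by
    have ih := List.consecutivePairs_eq_zip_dropLast (b :: t)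
    simp only [List.consecutivePairs, List.tail_cons] at ih ⊢
    rw [List.dropLast_cons_cons, List.zip_cons_cons, List.zip_cons_cons, ih]

theorem List.map_fst_consecutivePairs (l : List β) :
    l.consecutivePairs.map Prod.fst = l.dropLast := by
  rw [List.consecutivePairs_eq_zip_dropLast]
  exact List.map_fst_zip (by simp)

theorem List.map_snd_consecutivePairs (l : List β) : l.consecutivePairs.map Prod.snd = l.tail :=
  List.map_snd_zip (by simp)

theorem List.IsChain.rel_of_mem_consecutivePairs {l : List β} (hl : l.IsChain R) {a b : β}
    (h : (a, b) ∈ l.consecutivePairs) : R a b := by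
  rw [List.consecutivePairs_eq_zip_dropLast] at h
  exact (List.forall₂_iff_zip.1 (List.isChain_iff_forall₂.1 hl)).2 h

theorem List.exists_mem_consecutivePairs_of_mem_tail {l : List β} {b : β} (h : b ∈ l.tail) :
    ∃ a, (a, b) ∈ l.consecutivePairs := by
  rw [← List.map_snd_consecutivePairs, List.mem_map] at h
  obtain ⟨⟨a, b⟩, hab, rfl⟩ := h
  exact ⟨a, hab⟩

theorem List.mem_dropLast_of_mem_consecutivePairs {l : List β} {a b : β}
    (h : (a, b) ∈ l.consecutivePairs) : a ∈ l.dropLast := by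
  rw [← map_fst_consecutivePairs]
  exact List.mem_map_of_mem h

theorem List.Nodup.snd_eq_of_mem_consecutivePairs {l : List β} (hl : l.Nodup) {a b b' : β}
    (h : (a, b) ∈ l.consecutivePairs) (h' : (a, b') ∈ l.consecutivePairs) : b = b' := by
  have hnd : ((l.consecutivePairs).map Prod.fst).Nodup := by
    rw [map_fst_consecutivePairs]; exact hl.sublist (List.dropLast_sublist l)
  exact congrArg Prod.snd (List.inj_on_of_nodup_map hnd h h' rfl)

theorem List.Nodup.getLast_notMem_dropLast {l : List β} (hl : l.Nodup) (h : l ≠ []) :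
    l.getLast h ∉ l.dropLast := by
  have := List.dropLast_append_getLast h ▸ hl
  rw [List.nodup_append] at this
  exact fun hmem => this.2.2 _ hmem _ (List.mem_singleton_self _) rfl

end ListPaths

section PredecessorMap

variable {V : Type*} {E : V → V → Prop} {X Y : Finset V} {g : V → V}

structure IsPredecessorMap (E : V → V → Prop) (X Y : Finset V) (g : V → V) : Prop where
  eq_or_rel : ∀ u ∉ X, g u = u ∨ E (g u) u
  notMem : ∀ u ∉ X, g u ∉ Y
  injOn : Set.InjOn g {u | u ∉ X}

noncomputable def stopTime (X : Finset V) (g : V → V) (y : V) : ℕ := sInf {k | g^[k] y ∈ X}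

noncomputable def backwardPath (X : Finset V) (g : V → V) (y : V) : List V :=
  (List.range (stopTime X g y + 1)).reverse.map (g^[·] y)

theorem iterate_notMem_of_lt_stopTime {y : V} {k : ℕ} (hk : k < stopTime X g y) :
    g^[k] y ∉ X :=
  Nat.notMem_of_lt_sInf hk

theorem mem_backwardPath {y v : V} :
    v ∈ backwardPath X g y ↔ ∃ k ≤ stopTime X g y, g^[k] y = v := by
  simp only [backwardPath, List.mem_map, List.mem_reverse, List.mem_range, Nat.lt_add_one_iff]

theorem backwardPath_ne_nil (y : V) : backwardPath X g y ≠ [] := by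
  simp [backwardPath]

theorem head_backwardPath (y : V) :
    (backwardPath X g y).head (backwardPath_ne_nil y) = g^[stopTime X g y] y := by
  simp [backwardPath, List.range_succ]

theorem getLast_backwardPath (y : V) :
    (backwardPath X g y).getLast (backwardPath_ne_nil y) = y := by
  simp [backwardPath]

namespace IsPredecessorMap

theorem eq_of_iterate_eq_iterate_add (hg : IsPredecessorMap E X Y g) {a b : V} (ha : a ∈ Y)
    {i d : ℕ} (ha' : ∀ k < i, g^[k] a ∉ X) (hb' : ∀ k < i + d, g^[k] b ∉ X)
    (h : g^[i] a = g^[i + d] b) : d = 0 ∧ a = b := by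
  have hab := hg.injOn.eq_iterate_of_iterate_eq ha' (fun k hk => hb' (k + d) (by omega)) h
  cases d with
  | zero => exact ⟨rfl, hab⟩
  | succ d =>
    rw [Function.iterate_succ_apply'] at hab
    exact absurd (hab ▸ ha) (hg.notMem _ (hb' d (by omega)))

theorem exists_iterate_mem [Finite V] (hg : IsPredecessorMap E X Y g) {y : V} (hy : y ∈ Y) :
    ∃ k, g^[k] y ∈ X := by
  by_contra! hX
  obtain ⟨i, j, hne, heq⟩ := Finite.exists_ne_map_eq_of_infinite fun k => g^[k] y
  wlog hij : i < j generalizing i j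
  · exact this j i hne.symm heq.symm (by omega)
  obtain ⟨d, rfl⟩ := Nat.exists_eq_add_of_le hij.le
  have := hg.eq_of_iterate_eq_iterate_add hy (fun k _ => hX k) (fun k _ => hX k) heq
  omega

theorem iterate_stopTime_mem [Finite V] (hg : IsPredecessorMap E X Y g) {y : V} (hy : y ∈ Y) :
    g^[stopTime X g y] y ∈ X :=
  Nat.sInf_mem (hg.exists_iterate_mem hy)

theorem rel_iterate_succ [Finite V] (hg : IsPredecessorMap E X Y g) {y : V} (hy : y ∈ Y) {m : ℕ}
    (hm : m < stopTime X g y) : E (g^[m + 1] y) (g^[m] y) := by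
  have hmX := iterate_notMem_of_lt_stopTime hm
  rw [Function.iterate_succ_apply']
  refine (hg.eq_or_rel _ hmX).resolve_left fun hfix => hmX ?_
  -- a fixed point of `g` outside `X` would keep the orbit outside `X` forever
  have := hg.iterate_stopTime_mem hy
  rwa [← Nat.sub_add_cancel hm.le, Function.iterate_add_apply,
    Function.iterate_fixed hfix] at this

theorem isChain_backwardPath [Finite V] (hg : IsPredecessorMap E X Y g) {y : V} (hy : y ∈ Y) :
    (backwardPath X g y).IsChain E := by
  rw [backwardPath, List.isChain_map, List.isChain_reverse, List.isChain_range_succ]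
  exact fun m hm => hg.rel_iterate_succ hy hm

theorem eq_of_mem_backwardPath (hg : IsPredecessorMap E X Y g) {y z v : V} (hy : y ∈ Y)
    (hz : z ∈ Y) (hvy : v ∈ backwardPath X g y) (hvz : v ∈ backwardPath X g z) : y = z := by
  obtain ⟨i, hi, rfl⟩ := mem_backwardPath.1 hvy
  obtain ⟨j, hj, heq⟩ := mem_backwardPath.1 hvz
  clear hvy hvz
  wlog hij : i ≤ j generalizing y z i j
  · exact (this hz hy j hj i hi heq.symm (by omega)).symm
  obtain ⟨d, rfl⟩ := Nat.exists_eq_add_of_le hij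
  exact (hg.eq_of_iterate_eq_iterate_add hy
    (fun k hk => iterate_notMem_of_lt_stopTime (by omega))
    (fun k hk => iterate_notMem_of_lt_stopTime (by omega)) heq.symm).2

theorem gammoidIndep [Finite V] (hg : IsPredecessorMap E X Y g) : GammoidIndep E X Y :=
  ⟨backwardPath X g, fun y hy => ⟨backwardPath_ne_nil y,
    by rw [head_backwardPath]; exact hg.iterate_stopTime_mem hy,
    getLast_backwardPath y, hg.isChain_backwardPath hy⟩,
    fun y hy z hz hyz v hvy hvz => hyz (hg.eq_of_mem_backwardPath hy hz hvy hvz)⟩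

end IsPredecessorMap

end PredecessorMap

section SimpleLinkage

variable {V : Type*} {E : V → V → Prop} {X Y : Finset V} {Q : V → List V}

structure IsSimpleLinkage (E : V → V → Prop) (X Y : Finset V) (Q : V → List V) : Prop where
  nodup : ∀ y ∈ Y, (Q y).Nodup
  isChain : ∀ y ∈ Y, (Q y).IsChain E
  head?_mem : ∀ y ∈ Y, ∀ x ∈ (Q y).head?, x ∈ X
  getLast?_eq : ∀ y ∈ Y, (Q y).getLast? = some y
  eq_of_mem : ∀ y ∈ Y, ∀ z ∈ Y, ∀ v ∈ Q y, v ∈ Q z → y = z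

theorem GammoidIndep.exists_isSimpleLinkage (h : GammoidIndep E X Y) :
    ∃ Q, IsSimpleLinkage E X Y Q := by
  classical
  obtain ⟨P, hP, hdisj⟩ := h
  have hQ : ∀ y, ∃ Q : List V, y ∈ Y → Q.Nodup ∧ Q.IsChain E ∧
      (∀ x ∈ Q.head?, x ∈ X) ∧ Q.getLast? = some y ∧ Q ⊆ P y := by
    intro y
    by_cases hy : y ∈ Y
    · obtain ⟨hne, hhead, hlast, hch⟩ := hP y hy
      obtain ⟨Q, hnd, hchQ, hheadQ, hlastQ, hsub⟩ := List.IsChain.exists_nodup hch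
      refine ⟨Q, fun _ => ⟨hnd, hchQ, ?_, ?_, hsub⟩⟩
      · rw [hheadQ, List.head?_eq_some_head hne]
        simpa using hhead
      · rw [hlastQ, List.getLast?_eq_some_getLast hne, hlast]
    · exact ⟨[], fun h => absurd h hy⟩
  choose Q hQ using hQ
  refine ⟨Q, fun y hy => (hQ y hy).1, fun y hy => (hQ y hy).2.1, fun y hy => (hQ y hy).2.2.1,
    fun y hy => (hQ y hy).2.2.2.1, fun y hy z hz v hvy hvz => ?_⟩
  by_contra hyz
  exact hdisj y hy z hz hyz v ((hQ y hy).2.2.2.2 hvy) ((hQ z hz).2.2.2.2 hvz)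

namespace IsSimpleLinkage

theorem mem_self (hQ : IsSimpleLinkage E X Y Q) {y : V} (hy : y ∈ Y) : y ∈ Q y :=
  List.mem_of_getLast? (hQ.getLast?_eq y hy)

theorem mem_tail (hQ : IsSimpleLinkage E X Y Q) {y u : V} (hy : y ∈ Y) (hu : u ∈ Q y)
    (huX : u ∉ X) : u ∈ (Q y).tail := by
  obtain ⟨x, t, hxt⟩ := List.exists_cons_of_ne_nil (List.ne_nil_of_mem hu)
  have hx := hQ.head?_mem y hy x (by simp [hxt])
  rw [hxt, List.mem_cons] at hu
  rw [hxt]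
  exact hu.resolve_left (by rintro rfl; exact huX hx)

theorem mem_of_mem_consecutivePairs {y a u : V} (h : (a, u) ∈ (Q y).consecutivePairs) :
    a ∈ Q y :=
  List.dropLast_subset _ (List.mem_dropLast_of_mem_consecutivePairs h)

theorem notMem_of_mem_consecutivePairs (hQ : IsSimpleLinkage E X Y Q) {y a u : V} (hy : y ∈ Y)
    (h : (a, u) ∈ (Q y).consecutivePairs) : a ∉ Y := by
  intro ha
  obtain rfl := hQ.eq_of_mem a ha y hy a (hQ.mem_self ha) (mem_of_mem_consecutivePairs h)
  have hne : Q a ≠ [] := List.ne_nil_of_mem (hQ.mem_self ha)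
  have hlast : (Q a).getLast hne = a :=
    Option.some.inj ((List.getLast?_eq_some_getLast hne).symm.trans (hQ.getLast?_eq a ha))
  have hnot := (hQ.nodup a ha).getLast_notMem_dropLast hne
  rw [hlast] at hnot
  exact hnot (List.mem_dropLast_of_mem_consecutivePairs h)

theorem snd_eq_of_mem_consecutivePairs (hQ : IsSimpleLinkage E X Y Q) {y z a u u' : V}
    (hy : y ∈ Y) (hz : z ∈ Y) (h : (a, u) ∈ (Q y).consecutivePairs)
    (h' : (a, u') ∈ (Q z).consecutivePairs) : u = u' := by
  obtain rfl := hQ.eq_of_mem y hy z hz a (mem_of_mem_consecutivePairs h)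
    (mem_of_mem_consecutivePairs h')
  exact (hQ.nodup y hy).snd_eq_of_mem_consecutivePairs h h'

end IsSimpleLinkage

open Classical in
noncomputable def linkagePred (Y : Finset V) (Q : V → List V) (u : V) : V :=
  if h : ∃ a, ∃ y ∈ Y, (a, u) ∈ (Q y).consecutivePairs then h.choose else u

theorem linkagePred_spec {u : V} (h : ∃ a, ∃ y ∈ Y, (a, u) ∈ (Q y).consecutivePairs) :
    ∃ y ∈ Y, (linkagePred Y Q u, u) ∈ (Q y).consecutivePairs := by
  rw [linkagePred, dif_pos h]
  exact h.choose_spec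

theorem linkagePred_of_not {u : V} (h : ¬∃ a, ∃ y ∈ Y, (a, u) ∈ (Q y).consecutivePairs) :
    linkagePred Y Q u = u := by
  rw [linkagePred, dif_neg h]

theorem IsSimpleLinkage.exists_pred (hQ : IsSimpleLinkage E X Y Q) {y u : V} (hy : y ∈ Y)
    (hu : u ∈ Q y) (huX : u ∉ X) : ∃ a, ∃ y ∈ Y, (a, u) ∈ (Q y).consecutivePairs :=
  have ⟨a, ha⟩ := List.exists_mem_consecutivePairs_of_mem_tail (hQ.mem_tail hy hu huX)
  ⟨a, y, hy, ha⟩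

theorem IsSimpleLinkage.isPredecessorMap (hQ : IsSimpleLinkage E X Y Q) :
    IsPredecessorMap E X Y (linkagePred Y Q) where
  eq_or_rel u _ := by
    by_cases h : ∃ a, ∃ y ∈ Y, (a, u) ∈ (Q y).consecutivePairs
    · obtain ⟨y, hy, hpair⟩ := linkagePred_spec h
      exact Or.inr ((hQ.isChain y hy).rel_of_mem_consecutivePairs hpair)
    · exact Or.inl (linkagePred_of_not h)
  notMem u huX := by
    by_cases h : ∃ a, ∃ y ∈ Y, (a, u) ∈ (Q y).consecutivePairs
    · obtain ⟨y, hy, hpair⟩ := linkagePred_spec h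
      exact hQ.notMem_of_mem_consecutivePairs hy hpair
    · rw [linkagePred_of_not h]
      exact fun hu => h (hQ.exists_pred hu (hQ.mem_self hu) huX)
  injOn u huX v hvX huv := by
    have hpred : ∀ {w w'}, w' ∉ X →
        (∃ a, ∃ y ∈ Y, (a, w) ∈ (Q y).consecutivePairs) → linkagePred Y Q w = w' →
        ∃ a, ∃ y ∈ Y, (a, w') ∈ (Q y).consecutivePairs := by
      rintro w w' hw'X hw rfl
      obtain ⟨y, hy, hpair⟩ := linkagePred_spec hw
      exact hQ.exists_pred hy (mem_of_mem_consecutivePairs hpair) hw'X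
    by_cases hu : ∃ a, ∃ y ∈ Y, (a, u) ∈ (Q y).consecutivePairs <;>
      by_cases hv : ∃ a, ∃ y ∈ Y, (a, v) ∈ (Q y).consecutivePairs
    · obtain ⟨y, hy, hpu⟩ := linkagePred_spec hu
      obtain ⟨z, hz, hpv⟩ := linkagePred_spec hv
      rw [huv] at hpu
      exact hQ.snd_eq_of_mem_consecutivePairs hy hz hpu hpv
    · rw [linkagePred_of_not hv] at huv
      exact absurd (hpred hvX hu huv) hv
    · rw [linkagePred_of_not hu] at huv
      exact absurd (hpred huX hv huv.symm) hu
    · rwa [linkagePred_of_not hu, linkagePred_of_not hv] at huv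

end SimpleLinkage

section Gammoid

variable {V : Type*} {E : V → V → Prop} {X Y : Finset V}

theorem gammoidIndep_empty : GammoidIndep E X ∅ :=
  ⟨fun _ => [], by simp, by simp⟩

theorem GammoidIndep.mono {S T : Finset V} (h : GammoidIndep E X S) (hTS : T ⊆ S) :
    GammoidIndep E X T :=
  let ⟨P, hP, hdisj⟩ := h
  ⟨P, fun y hy => hP y (hTS hy), fun y hy z hz => hdisj y (hTS hy) z (hTS hz)⟩

def gammoidFamily [Fintype V] [DecidableEq V] (E : V → V → Prop) [DecidableRel E]
    (X : Finset V) (u : {u // u ∉ X}) : Finset V :=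
  insert u.1 (Finset.univ.filter (E · u.1))

theorem mem_gammoidFamily [Fintype V] [DecidableEq V] [DecidableRel E] {u : {u // u ∉ X}}
    {v : V} : v ∈ gammoidFamily E X u ↔ v = u.1 ∨ E v u.1 := by
  simp [gammoidFamily]

theorem exists_isPredecessorMap_iff [Fintype V] [DecidableEq V] [DecidableRel E] :
    (∃ g, IsPredecessorMap E X Y g) ↔ HasTransversalAvoiding (gammoidFamily E X) Y := by
  constructor
  · rintro ⟨g, hg⟩
    refine ⟨fun u => g u.1, fun u v huv => Subtype.ext (hg.injOn u.2 v.2 huv), fun u => ?_⟩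
    exact ⟨mem_gammoidFamily.2 (hg.eq_or_rel u.1 u.2), hg.notMem u.1 u.2⟩
  · rintro ⟨f, hf, hfN⟩
    refine ⟨fun v => if h : v ∈ X then v else f ⟨v, h⟩,
      ⟨fun u hu => ?_, fun u hu => ?_, ?_⟩⟩
    · rw [dif_neg hu]; exact mem_gammoidFamily.1 (hfN _).1
    · rw [dif_neg hu]; exact (hfN _).2
    · intro u hu v hv huv
      dsimp only at huv
      rw [dif_neg hu, dif_neg hv] at huv
      exact congrArg Subtype.val (hf huv)

theorem gammoidIndep_iff_hasTransversalAvoiding [Fintype V] [DecidableEq V] [DecidableRel E] :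
    GammoidIndep E X Y ↔ HasTransversalAvoiding (gammoidFamily E X) Y := by
  rw [← exists_isPredecessorMap_iff]
  constructor
  · intro h
    obtain ⟨Q, hQ⟩ := h.exists_isSimpleLinkage
    exact ⟨_, hQ.isPredecessorMap⟩
  · rintro ⟨g, hg⟩
    exact hg.gammoidIndep

end Gammoid

/-- The strict gammoid of a digraph with a set of sources is a matroid. -/
theorem gammoid_is_matroid {V : Type*} [DecidableEq V] [Fintype V]
    (E : V → V → Prop) (X : Finset V) :
    ∃ M : FinMatroid V, M.E = Finset.univ ∧
      ∀ Y : Finset V, M.Indep Y ↔ GammoidIndep E X Y := by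
  classical
  refine ⟨{ E := Finset.univ
            Indep := GammoidIndep E X
            indep_subset_ground := fun S _ => Finset.subset_univ S
            indep_empty := gammoidIndep_empty
            indep_mono := fun S T hS hTS => hS.mono hTS
            indep_exchange := ?_ }, rfl, fun Y => Iff.rfl⟩
  intro S T hS hT hST
  simp only [gammoidIndep_iff_hasTransversalAvoiding] at hS hT ⊢
  exact hS.exists_insert hT hST
end

section
/- Let S be a common independent set of matroids M₁ and M₂ on ground set U with d_{G(S)}(s,t) ≥ d. Then |S| ≥ (1 − O(1/d))·r, where r is the maximum size of a common independent set. Concretely: if every augmenting path in G(S) has length at least d, then r − |S| ≤ O(r/d). -/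
open Finset

variable {α : Type*} [DecidableEq α]

/-- Exchange-graph edges between ground-set elements, for a common independent set `S`. -/
def ExchangeEdge (M1 M2 : FinMatroid α) (S : Finset α) (u v : α) : Prop :=
  (u ∈ S ∧ v ∉ S ∧ M1.Indep (insert v (S.erase u))) ∨
  (u ∉ S ∧ v ∈ S ∧ M2.Indep (insert u (S.erase v)))

/-- An augmenting path in the exchange graph `G(S)`, recorded by its list of
interior vertices (the endpoints `s`, `t` are implicit). -/
def IsAugPath (M1 M2 : FinMatroid α) (S : Finset α) (p : List α) : Prop :=
  ∃ h : p ≠ [],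
    p.Nodup ∧ (∀ a ∈ p, a ∈ M1.E) ∧
    p.head h ∉ S ∧ M1.Indep (insert (p.head h) S) ∧
    p.getLast h ∉ S ∧ M2.Indep (insert (p.getLast h) S) ∧
    p.Chain' (ExchangeEdge M1 M2 S)

/-!
Let `R m` be the set of vertices within distance `m` of `s` in `G(S)`, and `L m = R (m+1) \ R m`.
If `m + 1 < d`, no vertex of `R m` is adjacent to `t`, as that would give an augmenting path
shorter than `d`. The exchange property, applied to `S ∩ R (m+1)` in `M₂` and to `S \ R m` in
`M₁`, then gives `|T ∩ R m| ≤ |S ∩ R (m+1)|` and `|T \ R (m+1)| ≤ |S \ R m|`; adding,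
`|T| - |S| ≤ |S ∩ L m| + |T ∩ L m|`. The layers `L m` are disjoint, so summing over `m < d - 1`
gives `(d - 1)(|T| - |S|) ≤ |S| + |T|`.
-/

namespace FinMatroid

variable (M : FinMatroid α)

theorem card_le_card_of_forall_not_indep_insert {I J : Finset α} (hI : M.Indep I)
    (hJ : M.Indep J) (h : ∀ x ∈ J \ I, ¬ M.Indep (insert x I)) : #J ≤ #I := by
  by_contra! hlt
  obtain ⟨x, hxJ, hxI, hx⟩ := M.indep_exchange hI hJ hlt
  exact h x (mem_sdiff.2 ⟨hxJ, hxI⟩) hx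

theorem indep_insert_or_exists_indep_insert_erase {S I : Finset α} {v : α} (hS : M.Indep S)
    (hIS : I ⊆ S) (hv : v ∉ S) (hvI : M.Indep (insert v I)) :
    M.Indep (insert v S) ∨ ∃ u ∈ S \ I, M.Indep (insert v (S.erase u)) := by
  induction hn : #(S \ I) generalizing I with
  | zero =>
    rw [card_eq_zero, sdiff_eq_empty_iff_subset] at hn
    exact Or.inl (hIS.antisymm hn ▸ hvI)
  | succ n ih =>
    have hcard : #S = #I + (n + 1) := by
      rw [← hn, card_sdiff_of_subset hIS]
      have := card_le_card hIS
      omega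
    rcases Nat.eq_zero_or_pos n with rfl | hn0
    · obtain ⟨u, hu⟩ := card_eq_one.1 hn
      have hI : I = S.erase u := by
        rw [← sdiff_singleton_eq_erase, ← hu, Finset.sdiff_sdiff_eq_self hIS]
      exact Or.inr ⟨u, by simp [hu], hI ▸ hvI⟩
    · have hlt : #(insert v I) < #S := by
        rw [card_insert_of_notMem fun h => hv (hIS h)]; omega
      obtain ⟨x, hxS, hxvI, hx⟩ := M.indep_exchange hvI hS hlt
      rw [mem_insert, not_or] at hxvI
      have hxI : M.Indep (insert v (insert x I)) := by rwa [insert_comm]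
      have hn' : #(S \ insert x I) = n := by
        rw [card_sdiff_of_subset (insert_subset hxS hIS), card_insert_of_notMem hxvI.2]; omega
      refine (ih (insert_subset hxS hIS) hxI hn').imp_right ?_
      rintro ⟨u, hu, hind⟩
      exact ⟨u, sdiff_subset_sdiff subset_rfl (subset_insert x I) hu, hind⟩

end FinMatroid

/-- `p` is the interior of an `s`-walk in `G(S)` without repeated vertices; `p.length` is then
the distance travelled from `s`. -/
def IsSourcePath (M1 M2 : FinMatroid α) (S : Finset α) (p : List α) : Prop :=
  p.Nodup ∧ (∀ a ∈ p, a ∈ M1.E) ∧ (∀ a ∈ p.head?, a ∉ S ∧ M1.Indep (insert a S)) ∧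
    p.IsChain (ExchangeEdge M1 M2 S)

def ReachableWithin (M1 M2 : FinMatroid α) (S : Finset α) (n : ℕ) (v : α) : Prop :=
  ∃ p, IsSourcePath M1 M2 S p ∧ v ∈ p.getLast? ∧ p.length ≤ n

namespace IsSourcePath

variable {M1 M2 : FinMatroid α} {S : Finset α} {p q : List α}

theorem of_prefix (hq : IsSourcePath M1 M2 S q) (hpq : p <+: q) : IsSourcePath M1 M2 S p := by
  obtain ⟨hnd, hE, hhead, hchain⟩ := hq
  refine ⟨hnd.sublist hpq.sublist, fun a ha => hE a (hpq.subset ha), ?_, hchain.prefix hpq⟩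
  obtain ⟨r, rfl⟩ := hpq
  cases p with
  | nil => simp
  | cons b t => simpa using hhead

theorem append_singleton {u v : α} (hp : IsSourcePath M1 M2 S p) (hu : u ∈ p.getLast?)
    (huv : ExchangeEdge M1 M2 S u v) (hvp : v ∉ p) (hv : v ∈ M1.E) :
    IsSourcePath M1 M2 S (p ++ [v]) := by
  obtain ⟨hnd, hE, hhead, hchain⟩ := hp
  obtain ⟨b, t, rfl⟩ : ∃ b t, p = b :: t := List.exists_cons_of_ne_nil (by rintro rfl; simp at hu)
  refine ⟨hnd.append (List.nodup_singleton v) (by simpa using hvp), ?_, by simpa using hhead,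
    List.isChain_append.2 ⟨hchain, List.isChain_singleton v, ?_⟩⟩
  · simp only [List.mem_append, List.mem_singleton]
    rintro a (ha | rfl)
    exacts [hE a ha, hv]
  · rintro x hx y ⟨⟩
    rwa [Option.mem_unique hx hu]

end IsSourcePath

namespace ReachableWithin

variable {M1 M2 : FinMatroid α} {S : Finset α} {m n : ℕ} {u v : α}

theorem mono (hmn : m ≤ n) (h : ReachableWithin M1 M2 S m v) : ReachableWithin M1 M2 S n v :=
  let ⟨p, hp, hv, hlen⟩ := h
  ⟨p, hp, hv, hlen.trans hmn⟩

theorem monotone : Monotone (ReachableWithin M1 M2 S) :=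
  fun _ _ hmn _ => mono hmn

theorem one (hvS : v ∉ S) (hv : M1.Indep (insert v S)) : ReachableWithin M1 M2 S 1 v := by
  refine ⟨[v], ⟨List.nodup_singleton v, ?_, by simpa using ⟨hvS, hv⟩, List.isChain_singleton v⟩,
    rfl, le_rfl⟩
  simpa using M1.indep_subset_ground hv (mem_insert_self v S)

theorem of_mem {p : List α} (hp : IsSourcePath M1 M2 S p) (hv : v ∈ p) :
    ReachableWithin M1 M2 S p.length v := by
  obtain ⟨l₁, l₂, rfl⟩ := List.append_of_mem hv
  have hpre : l₁ ++ [v] <+: l₁ ++ v :: l₂ := ⟨l₂, by simp⟩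
  exact ⟨l₁ ++ [v], hp.of_prefix hpre, by simp, hpre.length_le⟩

theorem step (h : ReachableWithin M1 M2 S n u) (huv : ExchangeEdge M1 M2 S u v)
    (hv : v ∈ M1.E) : ReachableWithin M1 M2 S (n + 1) v := by
  obtain ⟨p, hp, hu, hlen⟩ := h
  by_cases hvp : v ∈ p
  · exact (of_mem hp hvp).mono (by omega)
  · exact ⟨p ++ [v], hp.append_singleton hu huv hvp hv, by simp, by simpa using hlen⟩

theorem exists_isAugPath (h : ReachableWithin M1 M2 S n v) (hvS : v ∉ S)
    (hv : M2.Indep (insert v S)) : ∃ p, IsAugPath M1 M2 S p ∧ p.length ≤ n := by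
  obtain ⟨p, ⟨hnd, hE, hhead, hchain⟩, hlast, hlen⟩ := h
  have hne : p ≠ [] := by rintro rfl; simp at hlast
  obtain rfl : p.getLast hne = v := by simpa [List.getLast?_eq_some_getLast hne] using hlast
  obtain ⟨hheadS, hhead1⟩ := hhead _ (List.head?_eq_some_head hne)
  exact ⟨p, ⟨hne, hnd, hE, hheadS, hhead1, hvS, hv, hchain⟩, hlen⟩

end ReachableWithin

theorem Finset.sum_card_filter_succ_and_not_le {P : ℕ → α → Prop} [∀ n, DecidablePred (P n)]
    (hP : Monotone P) (U : Finset α) (k : ℕ) :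
    ∑ m ∈ range k, #{x ∈ U | P (m + 1) x ∧ ¬ P m x} ≤ #U := by
  have hdisj : (range k : Set ℕ).PairwiseDisjoint fun m => {x ∈ U | P (m + 1) x ∧ ¬ P m x} :=
    ((pairwise_disjoint_on _).2 fun m n hmn =>
      disjoint_filter.2 fun x _ hm hn => hn.2 (hP hmn x hm.1)).set_pairwise _
  rw [← card_biUnion hdisj]
  exact card_le_card (biUnion_subset.2 fun _ _ => filter_subset _ _)

section Counting

open scoped Classical

variable {M1 M2 : FinMatroid α} {S T : Finset α} {m k : ℕ}

theorem card_filter_reachableWithin_le (hS1 : M1.Indep S) (hS2 : M2.Indep S) (hT2 : M2.Indep T)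
    (hno : ∀ p, IsAugPath M1 M2 S p → m < p.length) :
    #{x ∈ T | ReachableWithin M1 M2 S m x} ≤ #{x ∈ S | ReachableWithin M1 M2 S (m + 1) x} := by
  refine M2.card_le_card_of_forall_not_indep_insert (M2.indep_mono hS2 (filter_subset _ _))
    (M2.indep_mono hT2 (filter_subset _ _)) fun x hx hind => ?_
  simp only [mem_sdiff, mem_filter, not_and] at hx
  obtain ⟨⟨-, hxR⟩, hxS'⟩ := hx
  have hxS : x ∉ S := fun hxS => hxS' hxS (hxR.mono m.le_succ)
  rcases M2.indep_insert_or_exists_indep_insert_erase hS2 (filter_subset _ _) hxS hind with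
    hxaug | ⟨u, hu, hu2⟩
  · obtain ⟨p, hp, hlen⟩ := hxR.exists_isAugPath hxS hxaug
    exact (hno p hp).not_ge hlen
  · rw [mem_sdiff, mem_filter, not_and] at hu
    exact hu.2 hu.1 (hxR.step (Or.inr ⟨hxS, hu.1, hu2⟩) (M1.indep_subset_ground hS1 hu.1))

theorem card_filter_not_reachableWithin_le (hS1 : M1.Indep S) (hT1 : M1.Indep T) :
    #{x ∈ T | ¬ ReachableWithin M1 M2 S (m + 1) x} ≤ #{x ∈ S | ¬ ReachableWithin M1 M2 S m x} := by
  refine M1.card_le_card_of_forall_not_indep_insert (M1.indep_mono hS1 (filter_subset _ _))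
    (M1.indep_mono hT1 (filter_subset _ _)) fun x hx hind => ?_
  simp only [mem_sdiff, mem_filter, not_and, not_not] at hx
  obtain ⟨⟨hxT, hxR⟩, hxS'⟩ := hx
  have hxS : x ∉ S := fun hxS => hxR ((hxS' hxS).mono m.le_succ)
  rcases M1.indep_insert_or_exists_indep_insert_erase hS1 (filter_subset _ _) hxS hind with
    hxaug | ⟨u, hu, hu1⟩
  · exact hxR ((ReachableWithin.one hxS hxaug).mono (by omega))
  · simp only [mem_sdiff, mem_filter, not_and, not_not] at hu
    exact hxR ((hu.2 hu.1).step (Or.inl ⟨hu.1, hxS, hu1⟩) (M1.indep_subset_ground hT1 hxT))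

theorem card_le_add_card_filter_reachableWithin_succ_and_not (hS1 : M1.Indep S)
    (hS2 : M2.Indep S) (hT1 : M1.Indep T) (hT2 : M2.Indep T)
    (hno : ∀ p, IsAugPath M1 M2 S p → m < p.length) :
    #T ≤ #S + #{x ∈ S | ReachableWithin M1 M2 S (m + 1) x ∧ ¬ ReachableWithin M1 M2 S m x} +
      #{x ∈ T | ReachableWithin M1 M2 S (m + 1) x ∧ ¬ ReachableWithin M1 M2 S m x} := by
  have hT_le := card_filter_reachableWithin_le hS1 hS2 hT2 hno
  have hT_not_le := card_filter_not_reachableWithin_le (M2 := M2) hS1 hT1 (m := m)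
  set R := ReachableWithin M1 M2 S
  have hsplit (U : Finset α) :
      #{x ∈ U | R (m + 1) x} ≤ #{x ∈ U | R m x} + #{x ∈ U | R (m + 1) x ∧ ¬ R m x} := by
    refine (card_le_card fun x hx => ?_).trans (card_union_le _ _)
    simp only [mem_filter, mem_union] at hx ⊢
    tauto
  have hT : #{x ∈ T | R (m + 1) x} + #{x ∈ T | ¬ R (m + 1) x} = #T :=
    card_filter_add_card_filter_not _
  have hS : #{x ∈ S | R m x} + #{x ∈ S | ¬ R m x} = #S := card_filter_add_card_filter_not _
  have := hsplit S
  have := hsplit T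
  omega

theorem mul_card_sub_card_le (hS1 : M1.Indep S) (hS2 : M2.Indep S) (hT1 : M1.Indep T)
    (hT2 : M2.Indep T) (hno : ∀ p, IsAugPath M1 M2 S p → k ≤ p.length) :
    k * (#T - #S) ≤ #S + #T := by
  set layer := fun (U : Finset α) m =>
    #{x ∈ U | ReachableWithin M1 M2 S (m + 1) x ∧ ¬ ReachableWithin M1 M2 S m x}
  calc k * (#T - #S) = ∑ m ∈ range k, (#T - #S) := by simp
    _ ≤ ∑ m ∈ range k, (layer S m + layer T m) := sum_le_sum fun m hm => by
      have := card_le_add_card_filter_reachableWithin_succ_and_not hS1 hS2 hT1 hT2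
        fun p hp => (mem_range.1 hm).trans_le (hno p hp)
      dsimp only [layer]
      omega
    _ = ∑ m ∈ range k, layer S m + ∑ m ∈ range k, layer T m := sum_add_distrib
    _ ≤ #S + #T := add_le_add (sum_card_filter_succ_and_not_le ReachableWithin.monotone S k)
      (sum_card_filter_succ_and_not_le ReachableWithin.monotone T k)

end Counting

theorem cunningham_approximation_general (M1 M2 : FinMatroid α)
    (S : Finset α) (hS1 : M1.Indep S) (hS2 : M2.Indep S)
    (d : ℕ) (hd : ∀ p : List α, IsAugPath M1 M2 S p → d ≤ p.length + 1)
    (T : Finset α) (hT1 : M1.Indep T) (hT2 : M2.Indep T) :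
    d * (T.card - S.card) ≤ 2 * T.card := by
  obtain _ | k := d
  · simp
  have hk := mul_card_sub_card_le hS1 hS2 hT1 hT2 fun p hp => Nat.le_of_succ_le_succ (hd p hp)
  rw [add_one_mul]
  rcases le_total T.card S.card with h | h
  · simp [Nat.sub_eq_zero_of_le h]
  · omega

/-- Cunningham's approximation lemma: if every augmenting path in `G(S)` has
length at least `d`, then `r - |S| = O(r / d)` (with constant `2`). -/
theorem cunningham_approximation (M1 M2 : FinMatroid α) (hE : M1.E = M2.E)
    (S : Finset α) (hS1 : M1.Indep S) (hS2 : M2.Indep S)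
    (d : ℕ) (hd : ∀ p : List α, IsAugPath M1 M2 S p → d ≤ p.length + 1)
    (T : Finset α) (hT1 : M1.Indep T) (hT2 : M2.Indep T)
    (hTmax : ∀ T' : Finset α, M1.Indep T' → M2.Indep T' → T'.card ≤ T.card) :
    d * (T.card - S.card) ≤ 2 * T.card :=
  cunningham_approximation_general M1 M2 S hS1 hS2 d hd T hT1 hT2
end
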